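/- arXiv:2103.07057 — 2 statements merged into one kernel-verified Lean document; each statement's English description precedes it below -/
import Mathlib

section
/- For the complexified Kodaira Lie algebra, the Cauchy–Riemann operator D satisfies D(W) = 0 and D(Tⱼ)(T̄ₖ) = −(i/2)δⱼₖW, D(Tⱼ)(W̄) = 0 for all 1 ≤ j, k ≤ n. Moreover the kernel of D equals ℂW, and D restricts to a linear isomorphism from 𝔱^{1,0} = span_ℂ{T₁, …, Tₙ} onto the space of linear maps 𝔤^{0,1} → ℂW that vanish at W̄. (Hodge decomposition of the type-(1,0) space: H^{1,0} = 𝔠^{1,0} = ℂW and ∂̄ : 𝔱^{1,0} → 𝔠^{1,0}⊗𝔱^{0,1} is an isomorphism.) -/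
open Complex

/-- Index type for the basis `{X₁,…,Xₙ, Y₁,…,Yₙ, Z₁, Z₂}` of the Kodaira Lie algebra;
the same index set indexes the ℂ-basis of its complexification. -/
abbrev KIdx (n : ℕ) := Fin n ⊕ (Fin n ⊕ Fin 2)

def kX {n : ℕ} (j : Fin n) : KIdx n := Sum.inl j
def kY {n : ℕ} (j : Fin n) : KIdx n := Sum.inr (Sum.inl j)
def kZ {n : ℕ} (k : Fin 2) : KIdx n := Sum.inr (Sum.inr k)

/-- Structure constants of the Kodaira Lie algebra:
`⁅e i, e i'⁆ = kc i i' • Z₁`. -/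
def kc {n : ℕ} : KIdx n → KIdx n → ℝ
  | Sum.inl j, Sum.inr (Sum.inl k) => if j = k then 1 else 0
  | Sum.inr (Sum.inl j), Sum.inl k => if j = k then -1 else 0
  | _, _ => 0

/-! The only nonzero brackets are `⁅T̄ⱼ, Tⱼ⁆ = -(i/2) Z₁`, and `Z₁ = W + W̄` projects to `W`;
everything else is bookkeeping. So `D(Σ cⱼ Tⱼ)(T̄ₖ) = -(i/2) cₖ W`, which is injective in `c`
and hits every value system `μₖ W` (take `cₖ = 2i μₖ`), while `W` is central and hence in the
kernel of `D`. -/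

theorem LieAlgebra.lie_eq_zero_of_lie_basis_eq_zero {ι R L : Type*} [CommRing R] [LieRing L]
    [LieAlgebra R L] (b : Module.Basis ι R L) {x : L} (h : ∀ i, ⁅x, b i⁆ = 0) (y : L) :
    ⁅x, y⁆ = 0 := by
  have had : LieAlgebra.ad R L x = 0 := b.ext fun i => h i
  simpa using LinearMap.congr_fun had y

namespace Kodaira

variable {n : ℕ}

@[simp] theorem kc_kX_kX (j k : Fin n) : kc (kX j) (kX k) = 0 := rfl

@[simp] theorem kc_kX_kY (j k : Fin n) : kc (kX j) (kY k) = if j = k then 1 else 0 := rfl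

@[simp] theorem kc_kY_kX (j k : Fin n) : kc (kY j) (kX k) = if j = k then -1 else 0 := rfl

@[simp] theorem kc_kY_kY (j k : Fin n) : kc (kY j) (kY k) = 0 := rfl

@[simp] theorem kc_kZ_left (k : Fin 2) (i : KIdx n) : kc (kZ k) i = 0 := rfl

theorem kZ_zero_ne_kZ_one : (kZ 0 : KIdx n) ≠ kZ 1 := by simp [kZ]

variable {L : Type*} [LieRing L] [LieAlgebra ℂ L] (b : Module.Basis (KIdx n) ℂ L)

def IsKodairaBasis : Prop := ∀ i i' : KIdx n, ⁅b i, b i'⁆ = (kc i i' : ℂ) • b (kZ 0)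

noncomputable def T (j : Fin n) : L := (1 / 2 : ℂ) • b (kX j) - (I / 2 : ℂ) • b (kY j)

noncomputable def Tb (j : Fin n) : L := (1 / 2 : ℂ) • b (kX j) + (I / 2 : ℂ) • b (kY j)

noncomputable def W : L := (1 / 2 : ℂ) • b (kZ 0) - (I / 2 : ℂ) • b (kZ 1)

noncomputable def Wb : L := (1 / 2 : ℂ) • b (kZ 0) + (I / 2 : ℂ) • b (kZ 1)

variable {b}

theorem kZ_zero_eq_W_add_Wb : b (kZ 0) = W b + Wb b := by
  simp only [W, Wb]
  module

theorem W_ne_zero : W b ≠ 0 := by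
  intro h
  have hrepr := congr_arg (fun v => b.repr v (kZ 0)) h
  simp [W, kZ_zero_ne_kZ_one.symm] at hrepr

theorem lie_kZ_left (hb : IsKodairaBasis b) (k : Fin 2) (y : L) : ⁅b (kZ k), y⁆ = 0 :=
  LieAlgebra.lie_eq_zero_of_lie_basis_eq_zero b (fun i => by simp [hb _ i]) y

theorem lie_kZ_right (hb : IsKodairaBasis b) (k : Fin 2) (y : L) : ⁅y, b (kZ k)⁆ = 0 := by
  rw [← lie_skew, lie_kZ_left hb, neg_zero]

theorem lie_W_right (hb : IsKodairaBasis b) (y : L) : ⁅y, W b⁆ = 0 := by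
  simp [W, lie_kZ_right hb]

theorem lie_Wb_left (hb : IsKodairaBasis b) (y : L) : ⁅Wb b, y⁆ = 0 := by
  simp [Wb, add_lie, lie_kZ_left hb]

theorem lie_Tb_T (hb : IsKodairaBasis b) (j k : Fin n) :
    ⁅Tb b k, T b j⁆ = (if j = k then -(I / 2) else 0 : ℂ) • b (kZ 0) := by
  simp only [T, Tb, lie_sub, add_lie, lie_smul, smul_lie, hb _ _, kc_kX_kX, kc_kX_kY, kc_kY_kX,
    kc_kY_kY]
  by_cases hjk : j = k
  · subst hjk
    simp only [if_true]
    push_cast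
    module
  · simp only [hjk, Ne.symm hjk, if_false]
    push_cast
    module

variable {π : L →ₗ[ℂ] L}

theorem map_lie_Tb_T (hb : IsKodairaBasis b) (hπW : π (W b) = W b) (hπWb : π (Wb b) = 0)
    (j k : Fin n) : π ⁅Tb b k, T b j⁆ = if j = k then (-(I / 2) : ℂ) • W b else 0 := by
  rw [lie_Tb_T hb, map_smul, kZ_zero_eq_W_add_Wb, map_add, hπW, hπWb, add_zero]
  split_ifs <;> simp

theorem map_lie_Tb_sum_smul_T (hb : IsKodairaBasis b) (hπW : π (W b) = W b)
    (hπWb : π (Wb b) = 0) (k : Fin n) (c : Fin n → ℂ) :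
    π ⁅Tb b k, ∑ j, c j • T b j⁆ = (-(I / 2) * c k) • W b := by
  simp only [lie_sum, lie_smul, map_sum, map_smul, map_lie_Tb_T hb hπW hπWb, smul_ite,
    smul_zero, Finset.sum_ite_eq', Finset.mem_univ, if_true, smul_smul, mul_comm]

theorem eq_zero_of_mem_span_T (hb : IsKodairaBasis b) (hπW : π (W b) = W b)
    (hπWb : π (Wb b) = 0) {A : L} (hA : A ∈ Submodule.span ℂ (Set.range (T b)))
    (hD : ∀ k, π ⁅Tb b k, A⁆ = 0) : A = 0 := by
  obtain ⟨c, rfl⟩ := (Submodule.mem_span_range_iff_exists_fun ℂ).mp hA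
  have hc : ∀ k, c k = 0 := fun k => by
    simpa [map_lie_Tb_sum_smul_T hb hπW hπWb, W_ne_zero, I_ne_zero] using hD k
  simp [hc]

theorem exists_mem_span_T (hb : IsKodairaBasis b) (hπW : π (W b) = W b)
    (hπWb : π (Wb b) = 0) (μ : Fin n → ℂ) :
    ∃ A ∈ Submodule.span ℂ (Set.range (T b)), ∀ k, π ⁅Tb b k, A⁆ = μ k • W b := by
  refine ⟨∑ j, (2 * I * μ j) • T b j,
    Submodule.sum_mem _ fun j _ => Submodule.smul_mem _ _ (Submodule.subset_span ⟨j, rfl⟩),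
    fun k => ?_⟩
  rw [map_lie_Tb_sum_smul_T hb hπW hπWb]
  congr 1
  linear_combination (-μ k) * I_mul_I

theorem kernel_eq_span_W (hb : IsKodairaBasis b) (hπW : π (W b) = W b) (hπWb : π (Wb b) = 0) :
    {A : L | A ∈ Submodule.span ℂ (Set.range (T b) ∪ {W b}) ∧
        ∀ B ∈ Submodule.span ℂ (Set.range (Tb b) ∪ {Wb b}), π ⁅B, A⁆ = 0}
      = ↑(Submodule.span ℂ ({W b} : Set L)) := by
  ext A
  constructor
  · rintro ⟨hA, hD⟩
    rw [Submodule.span_union] at hA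
    obtain ⟨t, ht, w, hw, rfl⟩ := Submodule.mem_sup.mp hA
    obtain ⟨c, rfl⟩ := Submodule.mem_span_singleton.mp hw
    have ht0 : t = 0 := eq_zero_of_mem_span_T hb hπW hπWb ht fun k => by
      simpa [lie_W_right hb] using hD (Tb b k) (Submodule.subset_span (Or.inl ⟨k, rfl⟩))
    simpa [ht0] using hw
  · intro hA
    obtain ⟨c, rfl⟩ := Submodule.mem_span_singleton.mp hA
    exact ⟨Submodule.smul_mem _ _ (Submodule.subset_span (Or.inr rfl)),
      fun B _ => by simp [lie_W_right hb]⟩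

end Kodaira

theorem stmt_10_general (n : ℕ) (L : Type*) [LieRing L] [LieAlgebra ℂ L]
    (b : Module.Basis (KIdx n) ℂ L)
    (hb : ∀ i i' : KIdx n, ⁅b i, b i'⁆ = (kc i i' : ℂ) • b (kZ 0))
    (T Tb : Fin n → L) (W Wb : L)
    (hT : ∀ j, T j = (1 / 2 : ℂ) • b (kX j) - (I / 2 : ℂ) • b (kY j))
    (hTb : ∀ j, Tb j = (1 / 2 : ℂ) • b (kX j) + (I / 2 : ℂ) • b (kY j))
    (hW : W = (1 / 2 : ℂ) • b (kZ 0) - (I / 2 : ℂ) • b (kZ 1))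
    (hWb : Wb = (1 / 2 : ℂ) • b (kZ 0) + (I / 2 : ℂ) • b (kZ 1))
    (π : L →ₗ[ℂ] L)
    (hπW : π W = W) (hπWb : π Wb = 0) :
    (∀ y : L, π ⁅y, W⁆ = 0) ∧
    (∀ j k : Fin n, π ⁅Tb k, T j⁆ = if j = k then (-(I / 2) : ℂ) • W else 0) ∧
    (∀ j : Fin n, π ⁅Wb, T j⁆ = 0) ∧
    ({A : L | A ∈ Submodule.span ℂ (Set.range T ∪ {W}) ∧
        ∀ B ∈ Submodule.span ℂ (Set.range Tb ∪ {Wb}), π ⁅B, A⁆ = 0}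
      = ↑(Submodule.span ℂ ({W} : Set L))) ∧
    (∀ A ∈ Submodule.span ℂ (Set.range T),
        (∀ B ∈ Submodule.span ℂ (Set.range Tb ∪ {Wb}), π ⁅B, A⁆ = 0) → A = 0) ∧
    (∀ μ : Fin n → ℂ, ∃ A ∈ Submodule.span ℂ (Set.range T),
        (∀ k : Fin n, π ⁅Tb k, A⁆ = μ k • W) ∧ π ⁅Wb, A⁆ = 0) := by
  obtain rfl : T = Kodaira.T b := funext hT
  obtain rfl : Tb = Kodaira.Tb b := funext hTb
  obtain rfl : W = Kodaira.W b := hW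
  obtain rfl : Wb = Kodaira.Wb b := hWb
  have hD_Wb (A : L) : π ⁅Kodaira.Wb b, A⁆ = 0 := by rw [Kodaira.lie_Wb_left hb, map_zero]
  refine ⟨fun y => by rw [Kodaira.lie_W_right hb, map_zero], Kodaira.map_lie_Tb_T hb hπW hπWb,
    fun j => hD_Wb _, Kodaira.kernel_eq_span_W hb hπW hπWb,
    fun A hA hD => Kodaira.eq_zero_of_mem_span_T hb hπW hπWb hA fun k =>
      hD _ (Submodule.subset_span (Or.inl ⟨k, rfl⟩)),
    fun μ => ?_⟩
  obtain ⟨A, hA, hD⟩ := Kodaira.exists_mem_span_T hb hπW hπWb μ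
  exact ⟨A, hA, hD, hD_Wb A⟩

/-- for the complexified Kodaira Lie algebra, the Cauchy–Riemann operator
`D(A)(B̄) = π^{1,0}(⁅B̄, A⁆)` satisfies `D(W) = 0`, `D(Tⱼ)(T̄ₖ) = −(i/2)δⱼₖ W`,
`D(Tⱼ)(W̄) = 0`; its kernel (within `𝔤^{1,0}`) equals `ℂW`; and `D` restricts to a linear
isomorphism from `𝔱^{1,0} = span{T₁,…,Tₙ}` onto the space of linear maps
`𝔤^{0,1} → ℂW` vanishing at `W̄` (stated as injectivity on `𝔱^{1,0}` together with
surjectivity onto all prescribed such value systems).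
Here `π` is the projection `π^{1,0} : 𝔤_ℂ → 𝔤^{1,0}` with kernel `𝔤^{0,1}`. -/
theorem stmt_10 (n : ℕ) (hn : 1 ≤ n) (L : Type*) [LieRing L] [LieAlgebra ℂ L]
    (b : Module.Basis (KIdx n) ℂ L)
    (hb : ∀ i i' : KIdx n, ⁅b i, b i'⁆ = (kc i i' : ℂ) • b (kZ 0))
    (T Tb : Fin n → L) (W Wb : L)
    (hT : ∀ j, T j = (1 / 2 : ℂ) • b (kX j) - (I / 2 : ℂ) • b (kY j))
    (hTb : ∀ j, Tb j = (1 / 2 : ℂ) • b (kX j) + (I / 2 : ℂ) • b (kY j))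
    (hW : W = (1 / 2 : ℂ) • b (kZ 0) - (I / 2 : ℂ) • b (kZ 1))
    (hWb : Wb = (1 / 2 : ℂ) • b (kZ 0) + (I / 2 : ℂ) • b (kZ 1))
    (π : L →ₗ[ℂ] L)
    (hπT : ∀ j, π (T j) = T j) (hπTb : ∀ j, π (Tb j) = 0)
    (hπW : π W = W) (hπWb : π Wb = 0) :
    (∀ y : L, π ⁅y, W⁆ = 0) ∧
    (∀ j k : Fin n, π ⁅Tb k, T j⁆ = if j = k then (-(I / 2) : ℂ) • W else 0) ∧
    (∀ j : Fin n, π ⁅Wb, T j⁆ = 0) ∧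
    ({A : L | A ∈ Submodule.span ℂ (Set.range T ∪ {W}) ∧
        ∀ B ∈ Submodule.span ℂ (Set.range Tb ∪ {Wb}), π ⁅B, A⁆ = 0}
      = ↑(Submodule.span ℂ ({W} : Set L))) ∧
    (∀ A ∈ Submodule.span ℂ (Set.range T),
        (∀ B ∈ Submodule.span ℂ (Set.range Tb ∪ {Wb}), π ⁅B, A⁆ = 0) → A = 0) ∧
    (∀ μ : Fin n → ℂ, ∃ A ∈ Submodule.span ℂ (Set.range T),
        (∀ k : Fin n, π ⁅Tb k, A⁆ = μ k • W) ∧ π ⁅Wb, A⁆ = 0) :=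
  stmt_10_general n L b hb T Tb W Wb hT hTb hW hWb π hπW hπWb
end

section
/- For the complexified Kodaira Lie algebra, the kernel of the operator ∂̄ on Hom_ℂ(𝔤^{0,1}, 𝔤^{1,0}) equals the span of the following elements: ρ̄⊗W, the elements ω̄ᵏ⊗W for 1 ≤ k ≤ n, and the elements φⱼₖ for 1 ≤ j ≤ k ≤ n; in particular this kernel has complex dimension 1 + n + n(n+1)/2. (Hodge decomposition of the type-(1,1) space: the ∂̄-closed part is 𝔠^{1,1} ⊕ ⊙^{1,1} ⊕ (𝔠^{1,0}⊗𝔱^{0,1}).) -/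
open Complex

/-
Write `Γ ∈ Hom(𝔤^{0,1}, 𝔤^{1,0})` as a matrix in the bases `(T₁, …, Tₙ, W)` and
`(T̄₁, …, T̄ₙ, W̄)`. Since `Z₁, Z₂` are central, the only brackets between `𝔤^{0,1}` and `𝔤^{1,0}`
are `⁅T̄ₘ, Tⱼ⁆ = -(i/2) δₘⱼ Z₁`, and `π^{1,0} Z₁ = W`; hence `π^{1,0}⁅T̄ₘ, y⁆` is `-(i/2)` times
the `Tₘ`-coordinate of `y` times `W`, and `π^{1,0}⁅W̄, y⁆ = 0`. Testing the symmetry of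
`(B̄₁, B̄₂) ↦ π^{1,0}⁅B̄₁, Γ B̄₂⁆` on basis pairs, `∂̄Γ = 0` says exactly that the `Tⱼ`-row,
`T̄ₖ`-column block of the matrix is symmetric and the `Tⱼ`-row, `W̄`-column entries vanish.
The listed maps span this space, and they are linearly independent because each is detected by
its own matrix entry; counting them gives `1 + n + n(n+1)/2`.
-/

open Module

lemma Submodule.exists_basis_coe_eq {R M ι : Type*} [Ring R] [AddCommGroup M] [Module R M]
    {v : ι → M} (hv : LinearIndependent R v) {p : Submodule R M} (hp : span R (Set.range v) = p) :
    ∃ B : Basis ι R p, ∀ i, (B i : M) = v i := by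
  subst hp
  exact ⟨.span hv, fun i => congrArg Subtype.val (Basis.span_apply hv i)⟩

lemma Module.Basis.linearMap_repr_apply_apply {R M₁ M₂ ι₁ ι₂ : Type*} [CommSemiring R]
    [AddCommMonoid M₁] [AddCommMonoid M₂] [Module R M₁] [Module R M₂] [Fintype ι₁] [Fintype ι₂]
    [DecidableEq ι₁] (b₁ : Basis ι₁ R M₁) (b₂ : Basis ι₂ R M₂) (f : M₁ →ₗ[R] M₂)
    (i : ι₂) (j : ι₁) : (b₁.linearMap b₂).repr f (i, j) = b₂.repr (f (b₁ j)) i := by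
  simp [Matrix.stdBasis, LinearMap.toMatrix_apply]

lemma Module.Basis.coord_smulRight {R M₁ M₂ ι₁ ι₂ : Type*} [CommSemiring R] [AddCommMonoid M₁]
    [AddCommMonoid M₂] [Module R M₁] [Module R M₂] [Fintype ι₁] [Fintype ι₂] [DecidableEq ι₁]
    (b₁ : Basis ι₁ R M₁) (b₂ : Basis ι₂ R M₂) (i : ι₂) (j : ι₁) :
    (b₁.coord j).smulRight (b₂ i) = b₁.linearMap b₂ (i, j) :=
  b₁.ext fun k => by simp [linearMap_apply_apply, Finsupp.single_apply, eq_comm]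

lemma LinearMap.forall_apply_comm_iff_basis {R M N ι : Type*} [CommSemiring R] [AddCommMonoid M]
    [AddCommMonoid N] [Module R M] [Module R N] (b : Basis ι R M) (f : M →ₗ[R] M →ₗ[R] N) :
    (∀ x y, f x y = f y x) ↔ ∀ i j, f (b i) (b j) = f (b j) (b i) :=
  ⟨fun h _ _ => h _ _, fun h x y =>
    LinearMap.congr_fun₂ (LinearMap.ext_basis (B' := f.flip) b b h) x y⟩

lemma LinearIndependent.of_pairwise_dual_eq_zero_ne_zero {K V ι : Type*} [Field K]
    [AddCommGroup V] [Module K V] (v : ι → V) (f : ι → Dual K V)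
    (h0 : Pairwise fun i j => f i (v j) = 0) (h1 : ∀ i, f i (v i) ≠ 0) :
    LinearIndependent K v :=
  .of_pairwise_dual_eq_zero_one v (fun i => (f i (v i))⁻¹ • f i)
    (fun i j hij => by simp [h0 hij]) (fun i => by simp [h1 i])

lemma Finset.sum_smul_symmetrize {K M ι : Type*} [Field K] [NeZero (2 : K)] [AddCommGroup M]
    [Module K M] (s : Finset ι) (a : ι → ι → K) (ha : ∀ j k, a j k = a k j) (e : ι → ι → M) :
    ∑ j ∈ s, ∑ k ∈ s, a j k • ((1 / 2 : K) • (e j k + e k j)) =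
      ∑ j ∈ s, ∑ k ∈ s, a j k • e j k := by
  have hswap : ∑ j ∈ s, ∑ k ∈ s, a j k • e k j = ∑ j ∈ s, ∑ k ∈ s, a j k • e j k := by
    rw [Finset.sum_comm]; simp only [ha]
  simp only [smul_comm (a _ _) (1 / 2 : K), smul_add, Finset.sum_add_distrib, ← Finset.smul_sum,
    hswap, ← add_smul, add_halves, one_smul]

lemma Fintype.card_subtype_fst_le_snd {ι : Type*} [Fintype ι] [LinearOrder ι] :
    card {p : ι × ι // p.1 ≤ p.2} = card ι * (card ι + 1) / 2 := by
  rw [← card_congr Sym2.sortEquiv, Sym2.card, Nat.choose_two_right, Nat.add_sub_cancel,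
    Nat.mul_comm]

section SymmetricBlock

-- Applied with `E = B̄.linearMap B`, where `E (i, j)` is the map `β̄ʲ ⊗ Bᵢ` and `Unit` indexes
-- `W̄` resp. `W`: the `ι × ι` block is the `ω̄ᵏ ⊗ Tⱼ` part, the `ι × Unit` block the `ρ̄ ⊗ Tⱼ` part.
variable {K V ι : Type*} [Field K] [AddCommGroup V] [Module K V] [LinearOrder ι]
  (E : Basis ((ι ⊕ Unit) × (ι ⊕ Unit)) K V)

def symmetricBlockSubmodule : Submodule K V where
  carrier := {v | (∀ j k, E.repr v (.inl j, .inl k) = E.repr v (.inl k, .inl j)) ∧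
    ∀ j, E.repr v (.inl j, .inr ()) = 0}
  add_mem' := by
    rintro v w ⟨hv, hv'⟩ ⟨hw, hw'⟩
    exact ⟨fun j k => by simp [hv j k, hw j k], fun j => by simp [hv', hw']⟩
  zero_mem' := by simp
  smul_mem' := by
    rintro c v ⟨hv, hv'⟩
    exact ⟨fun j k => by simp [hv j k], fun j => by simp [hv']⟩

noncomputable def symmetricBlockFamily : Unit ⊕ ι ⊕ {p : ι × ι // p.1 ≤ p.2} → V :=
  Sum.elim (fun _ => E (.inr (), .inr ()))
    (Sum.elim (fun k => E (.inr (), .inl k))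
      fun p => (1 / 2 : K) • (E (.inl p.1.1, .inl p.1.2) + E (.inl p.1.2, .inl p.1.1)))

lemma range_symmetricBlockFamily :
    Set.range (symmetricBlockFamily E) = {E (.inr (), .inr ())}
      ∪ Set.range (fun k => E (.inr (), .inl k))
      ∪ {x | ∃ j k : ι, j ≤ k ∧ x = (1 / 2 : K) • (E (.inl j, .inl k) + E (.inl k, .inl j))} := by
  ext x
  simp only [Set.mem_union, Set.mem_singleton_iff, Set.mem_range, Set.mem_ofPred_eq]
  constructor
  · rintro ⟨(u | k | ⟨⟨j, k⟩, hjk⟩), rfl⟩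
    exacts [.inl (.inl rfl), .inl (.inr ⟨k, rfl⟩), .inr ⟨j, k, hjk, rfl⟩]
  · rintro ((rfl | ⟨k, rfl⟩) | ⟨j, k, hjk, rfl⟩)
    exacts [⟨.inl (), rfl⟩, ⟨.inr (.inl k), rfl⟩, ⟨.inr (.inr ⟨(j, k), hjk⟩), rfl⟩]

lemma span_symmetricBlockFamily [Fintype ι] [NeZero (2 : K)] :
    Submodule.span K (Set.range (symmetricBlockFamily E)) = symmetricBlockSubmodule E := by
  refine le_antisymm ?_ fun v ⟨hsymm, hzero⟩ => ?_
  · rw [Submodule.span_le]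
    rintro _ ⟨(u | k | ⟨⟨j, k⟩, hjk⟩), rfl⟩ <;> refine ⟨fun j' k' => ?_, fun j' => ?_⟩ <;>
      simp [symmetricBlockFamily, Finsupp.single_apply]
    split_ifs <;> grind
  set S := Submodule.span K (Set.range (symmetricBlockFamily E))
  have hsym : ∀ j k, (1 / 2 : K) • (E (.inl j, .inl k) + E (.inl k, .inl j)) ∈ S := by
    intro j k
    rcases le_total j k with h | h
    · exact Submodule.subset_span ⟨.inr (.inr ⟨(j, k), h⟩), rfl⟩
    · rw [add_comm]
      exact Submodule.subset_span ⟨.inr (.inr ⟨(k, j), h⟩), rfl⟩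
  rw [← E.sum_repr v]
  simp only [Fintype.sum_prod_type, Fintype.sum_sum_type, Fintype.sum_unique, hzero, zero_smul,
    add_zero]
  rw [← Finset.sum_smul_symmetrize _ _ hsymm]
  refine add_mem (Submodule.sum_mem _ fun j _ => Submodule.sum_mem _ fun k _ =>
    Submodule.smul_mem _ _ (hsym j k)) (add_mem (Submodule.sum_mem _ fun k _ => ?_) ?_)
  · exact Submodule.smul_mem _ _ (Submodule.subset_span ⟨.inr (.inl k), rfl⟩)
  · exact Submodule.smul_mem _ _ (Submodule.subset_span ⟨.inl (), rfl⟩)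

lemma linearIndependent_symmetricBlockFamily [NeZero (2 : K)] :
    LinearIndependent K (symmetricBlockFamily E) := by
  let entry : Unit ⊕ ι ⊕ {p : ι × ι // p.1 ≤ p.2} → (ι ⊕ Unit) × (ι ⊕ Unit) :=
    Sum.elim (fun _ => (.inr (), .inr ()))
      (Sum.elim (fun k => (.inr (), .inl k)) fun p => (.inl p.1.1, .inl p.1.2))
  refine .of_pairwise_dual_eq_zero_ne_zero _ (fun i => E.coord (entry i)) ?_ ?_
  · rintro (u | k | ⟨⟨j, k⟩, h⟩) (u' | k' | ⟨⟨j', k'⟩, h'⟩) hne <;>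
      simp [symmetricBlockFamily, entry, Finsupp.single_apply] at hne ⊢
    · exact Ne.symm hne
    · split_ifs <;> grind
  · rintro (u | k | ⟨⟨j, k⟩, h⟩) <;> simp [symmetricBlockFamily, entry, Finsupp.single_apply]
    split_ifs <;> simp [← two_mul, two_ne_zero]

lemma finrank_span_symmetricBlockFamily [Fintype ι] [NeZero (2 : K)] :
    finrank K (Submodule.span K (Set.range (symmetricBlockFamily E))) =
      1 + Fintype.card ι + Fintype.card ι * (Fintype.card ι + 1) / 2 := by
  rw [finrank_span_eq_card (linearIndependent_symmetricBlockFamily E)]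
  simp [Fintype.card_subtype_fst_le_snd, add_assoc]

end SymmetricBlock

lemma forall_apply_comm_iff_mem_symmetricBlockSubmodule {K V U X ι : Type*} [Field K]
    [AddCommGroup V] [Module K V] [AddCommGroup U] [Module K U] [AddCommGroup X] [Module K X]
    [Fintype ι] [LinearOrder ι] (B₁ : Basis (ι ⊕ Unit) K V) (B₂ : Basis (ι ⊕ Unit) K U)
    (β : V →ₗ[K] U →ₗ[K] X) {x₀ : X} (hx₀ : x₀ ≠ 0)
    (hβl : ∀ m y, β (B₁ (.inl m)) y = B₂.repr y (.inl m) • x₀)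
    (hβr : ∀ y, β (B₁ (.inr ())) y = 0) (Γ : V →ₗ[K] U) :
    (∀ v v', β v (Γ v') = β v' (Γ v)) ↔ Γ ∈ symmetricBlockSubmodule (B₁.linearMap B₂) := by
  refine (LinearMap.forall_apply_comm_iff_basis B₁ (β.compl₂ Γ)).trans ?_
  simp only [symmetricBlockSubmodule, Submodule.mem_mk, AddSubmonoid.mem_mk,
    AddSubsemigroup.mem_mk, Set.mem_ofPred_eq, Module.Basis.linearMap_repr_apply_apply,
    LinearMap.compl₂_apply, Sum.forall, hβl, hβr, smul_left_inj hx₀, @eq_comm X 0,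
    smul_eq_zero, hx₀, or_false]
  grind

lemma add_eq_and_I_smul_sub_eq {M : Type*} [AddCommGroup M] [Module ℂ M] {x y u v : M}
    (hu : u = (1 / 2 : ℂ) • x - (I / 2 : ℂ) • y) (hv : v = (1 / 2 : ℂ) • x + (I / 2 : ℂ) • y) :
    u + v = x ∧ I • (u - v) = y := by
  subst hu hv
  constructor
  · module
  · match_scalars
    · ring
    · linear_combination -I_sq

section Kodaira

variable {n : ℕ} {L : Type*} [LieRing L] [LieAlgebra ℂ L] {b : Basis (KIdx n) ℂ L}

lemma basis_kZ_mem_center (hb : ∀ i i' : KIdx n, ⁅b i, b i'⁆ = (kc i i' : ℂ) • b (kZ 0))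
    (k : Fin 2) : b (kZ k) ∈ LieAlgebra.center ℂ L := by
  have had : LieAlgebra.ad ℂ L (b (kZ k)) = 0 :=
    b.ext fun i => by rcases i with j | j | j <;> simp [hb, kc, kZ]
  rw [← LieAlgebra.self_module_ker_eq_center, LieModule.mem_ker]
  exact fun x => by simpa using LinearMap.congr_fun had x

lemma lie_Tb_T (hb : ∀ i i' : KIdx n, ⁅b i, b i'⁆ = (kc i i' : ℂ) • b (kZ 0)) {T Tb : Fin n → L}
    (hT : ∀ j, T j = (1 / 2 : ℂ) • b (kX j) - (I / 2 : ℂ) • b (kY j))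
    (hTb : ∀ j, Tb j = (1 / 2 : ℂ) • b (kX j) + (I / 2 : ℂ) • b (kY j)) (m j : Fin n) :
    ⁅Tb m, T j⁆ = (if m = j then -(I / 2) else 0 : ℂ) • b (kZ 0) := by
  simp only [hT, hTb, add_lie, lie_sub, lie_smul, smul_lie, hb]
  by_cases h : m = j
  · simp [h, kc, kX, kY]
    module
  · simp [h, kc, kX, kY]

lemma linearIndependent_T_W_Tb_Wb {T Tb : Fin n → L} {W Wb : L}
    (hT : ∀ j, T j = (1 / 2 : ℂ) • b (kX j) - (I / 2 : ℂ) • b (kY j))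
    (hTb : ∀ j, Tb j = (1 / 2 : ℂ) • b (kX j) + (I / 2 : ℂ) • b (kY j))
    (hW : W = (1 / 2 : ℂ) • b (kZ 0) - (I / 2 : ℂ) • b (kZ 1))
    (hWb : Wb = (1 / 2 : ℂ) • b (kZ 0) + (I / 2 : ℂ) • b (kZ 1)) :
    LinearIndependent ℂ
      (Sum.elim (Sum.elim T fun _ : Unit => W) (Sum.elim Tb fun _ : Unit => Wb)) := by
  set e := Sum.elim (Sum.elim T fun _ : Unit => W) (Sum.elim Tb fun _ : Unit => Wb)
  refine linearIndependent_of_top_le_span_of_card_eq_finrank ?_ ?_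
  · have he (i) : e i ∈ Submodule.span ℂ (Set.range e) := Submodule.subset_span ⟨i, rfl⟩
    rw [← b.span_eq, Submodule.span_le]
    rintro _ ⟨i, rfl⟩
    have hmem : ∀ {x y u v : L} {s : Submodule ℂ L},
        u = (1 / 2 : ℂ) • x - (I / 2 : ℂ) • y → v = (1 / 2 : ℂ) • x + (I / 2 : ℂ) • y →
        u ∈ s → v ∈ s → x ∈ s ∧ y ∈ s := by
      intro x y u v s hu' hv' hu hv
      obtain ⟨hx, hy⟩ := add_eq_and_I_smul_sub_eq hu' hv'
      exact ⟨hx ▸ add_mem hu hv, hy ▸ Submodule.smul_mem _ _ (sub_mem hu hv)⟩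
    rcases i with j | j | k
    · exact (hmem (hT j) (hTb j) (he (.inl (.inl j))) (he (.inr (.inl j)))).1
    · exact (hmem (hT j) (hTb j) (he (.inl (.inl j))) (he (.inr (.inl j)))).2
    · have hZ := hmem hW hWb (he (.inl (.inr ()))) (he (.inr (.inr ())))
      fin_cases k
      exacts [hZ.1, hZ.2]
  · rw [finrank_eq_card_basis b]
    simp
    ring

lemma lie_Tb_eq_repr_smul (hb : ∀ i i' : KIdx n, ⁅b i, b i'⁆ = (kc i i' : ℂ) • b (kZ 0))
    {T Tb : Fin n → L} {W : L}
    (hT : ∀ j, T j = (1 / 2 : ℂ) • b (kX j) - (I / 2 : ℂ) • b (kY j))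
    (hTb : ∀ j, Tb j = (1 / 2 : ℂ) • b (kX j) + (I / 2 : ℂ) • b (kY j))
    (hW : W ∈ LieAlgebra.center ℂ L) {g : Submodule ℂ L} (B : Basis (Fin n ⊕ Unit) ℂ g)
    (hBT : ∀ j, (B (.inl j) : L) = T j) (hBW : (B (.inr ()) : L) = W) (m : Fin n) (y : g) :
    ⁅Tb m, (y : L)⁆ = B.repr y (.inl m) • (-(I / 2) : ℂ) • b (kZ 0) := by
  rw [LieModule.mem_maxTrivSubmodule] at hW
  have hext : (LieAlgebra.ad ℂ L (Tb m)).comp g.subtype =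
      (B.coord (.inl m)).smulRight ((-(I / 2) : ℂ) • b (kZ 0)) :=
    B.ext fun i => by
      rcases i with j | ⟨⟩
      · rcases eq_or_ne m j with rfl | h
        · simp [hBT, lie_Tb_T hb hT hTb]
        · simp [hBT, lie_Tb_T hb hT hTb, h]
      · simp [hBW, hW]
  exact LinearMap.congr_fun hext y

lemma forall_proj_lie_comm_iff_mem_symmetricBlockSubmodule
    (hb : ∀ i i' : KIdx n, ⁅b i, b i'⁆ = (kc i i' : ℂ) • b (kZ 0)) {T Tb : Fin n → L} {W Wb : L}
    (hT : ∀ j, T j = (1 / 2 : ℂ) • b (kX j) - (I / 2 : ℂ) • b (kY j))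
    (hTb : ∀ j, Tb j = (1 / 2 : ℂ) • b (kX j) + (I / 2 : ℂ) • b (kY j))
    (hW : W = (1 / 2 : ℂ) • b (kZ 0) - (I / 2 : ℂ) • b (kZ 1))
    (hWb : Wb = (1 / 2 : ℂ) • b (kZ 0) + (I / 2 : ℂ) • b (kZ 1)) {g10 g01 : Submodule ℂ L}
    (B10 : Basis (Fin n ⊕ Unit) ℂ g10) (B01 : Basis (Fin n ⊕ Unit) ℂ g01)
    (hB10 : ∀ i, (B10 i : L) = Sum.elim T (fun _ => W) i)
    (hB01 : ∀ i, (B01 i : L) = Sum.elim Tb (fun _ => Wb) i)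
    (π' : L →ₗ[ℂ] g10) (hπ : π' (b (kZ 0)) = B10 (.inr ())) (Γ : g01 →ₗ[ℂ] g10) :
    (∀ B1 B2 : g01, π' ⁅(B1 : L), (Γ B2 : L)⁆ = π' ⁅(B2 : L), (Γ B1 : L)⁆) ↔
      Γ ∈ symmetricBlockSubmodule (B01.linearMap B10) := by
  have hZ (c d : ℂ) : c • b (kZ 0) + d • b (kZ 1) ∈ LieAlgebra.center ℂ L :=
    add_mem (Submodule.smul_mem _ _ (basis_kZ_mem_center hb 0))
      (Submodule.smul_mem _ _ (basis_kZ_mem_center hb 1))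
  have hWc : W ∈ LieAlgebra.center ℂ L := by
    rw [hW, sub_eq_add_neg, ← neg_smul]
    exact hZ _ _
  have hWbc : Wb ∈ LieAlgebra.center ℂ L := hWb ▸ hZ _ _
  rw [← LieAlgebra.self_module_ker_eq_center, LieModule.mem_ker] at hWbc
  refine forall_apply_comm_iff_mem_symmetricBlockSubmodule B01 B10
    (((LieAlgebra.ad ℂ L : L →ₗ[ℂ] Module.End ℂ L).compl₁₂ g01.subtype g10.subtype).compr₂ π')
    (x₀ := (-(I / 2) : ℂ) • B10 (.inr ())) (smul_ne_zero (by simp [I_ne_zero]) (B10.ne_zero _))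
    (fun m y => ?_) (fun y => ?_) Γ
  · simp [hB01, lie_Tb_eq_repr_smul hb hT hTb hWc B10 (fun j => hB10 (.inl j)) (hB10 _), hπ]
  · simp [hB01, hWbc]

end Kodaira

theorem stmt_12_general (n : ℕ) (L : Type*) [LieRing L] [LieAlgebra ℂ L]
    (b : Module.Basis (KIdx n) ℂ L)
    (hb : ∀ i i' : KIdx n, ⁅b i, b i'⁆ = (kc i i' : ℂ) • b (kZ 0))
    (T Tb : Fin n → L) (W Wb : L)
    (hT : ∀ j, T j = (1 / 2 : ℂ) • b (kX j) - (I / 2 : ℂ) • b (kY j))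
    (hTb : ∀ j, Tb j = (1 / 2 : ℂ) • b (kX j) + (I / 2 : ℂ) • b (kY j))
    (hW : W = (1 / 2 : ℂ) • b (kZ 0) - (I / 2 : ℂ) • b (kZ 1))
    (hWb : Wb = (1 / 2 : ℂ) • b (kZ 0) + (I / 2 : ℂ) • b (kZ 1))
    (g10 g01 : Submodule ℂ L)
    (hg10 : g10 = Submodule.span ℂ (Set.range T ∪ {W}))
    (hg01 : g01 = Submodule.span ℂ (Set.range Tb ∪ {Wb}))
    (hTg : ∀ j, T j ∈ g10) (hWg : W ∈ g10)
    (hTbg : ∀ j, Tb j ∈ g01) (hWbg : Wb ∈ g01)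
    (π' : L →ₗ[ℂ] ↥g10)
    (hπW : π' W = ⟨W, hWg⟩) (hπWb : π' Wb = 0)
    (ρb : ↥g01 →ₗ[ℂ] ℂ) (ωb : Fin n → (↥g01 →ₗ[ℂ] ℂ))
    (hρbW : ρb ⟨Wb, hWbg⟩ = 1) (hρbT : ∀ j, ρb ⟨Tb j, hTbg j⟩ = 0)
    (hωbT : ∀ j k, ωb j ⟨Tb k, hTbg k⟩ = if j = k then 1 else 0)
    (hωbW : ∀ j, ωb j ⟨Wb, hWbg⟩ = 0) :
    ({Γ : ↥g01 →ₗ[ℂ] ↥g10 | ∀ B1 B2 : ↥g01,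
        π' ⁅(B1 : L), ((Γ B2 : ↥g10) : L)⁆ = π' ⁅(B2 : L), ((Γ B1 : ↥g10) : L)⁆}
      = ↑(Submodule.span ℂ
          ({ρb.smulRight ⟨W, hWg⟩}
            ∪ Set.range (fun k : Fin n => (ωb k).smulRight ⟨W, hWg⟩)
            ∪ {x : ↥g01 →ₗ[ℂ] ↥g10 | ∃ j k : Fin n, j ≤ k ∧
                x = (1 / 2 : ℂ) • ((ωb k).smulRight ⟨T j, hTg j⟩
                      + (ωb j).smulRight ⟨T k, hTg k⟩)}))) ∧
    Module.finrank ℂ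
        ↥(Submodule.span ℂ
          ({ρb.smulRight ⟨W, hWg⟩}
            ∪ Set.range (fun k : Fin n => (ωb k).smulRight ⟨W, hWg⟩)
            ∪ {x : ↥g01 →ₗ[ℂ] ↥g10 | ∃ j k : Fin n, j ≤ k ∧
                x = (1 / 2 : ℂ) • ((ωb k).smulRight ⟨T j, hTg j⟩
                      + (ωb j).smulRight ⟨T k, hTg k⟩)}))
      = 1 + n + n * (n + 1) / 2 := by
  have hlin := linearIndependent_T_W_Tb_Wb hT hTb hW hWb
  obtain ⟨B10, hB10⟩ := Submodule.exists_basis_coe_eq (v := Sum.elim T fun _ => W) (p := g10)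
    (hlin.comp _ Sum.inl_injective) (by rw [hg10]; simp [Set.Sum.elim_range])
  obtain ⟨B01, hB01⟩ := Submodule.exists_basis_coe_eq (v := Sum.elim Tb fun _ => Wb) (p := g01)
    (hlin.comp _ Sum.inr_injective) (by rw [hg01]; simp [Set.Sum.elim_range])
  have hT10 (j) : (⟨T j, hTg j⟩ : g10) = B10 (.inl j) :=
    Subtype.ext (hB10 (.inl j)).symm
  have hW10 : (⟨W, hWg⟩ : g10) = B10 (.inr ()) := Subtype.ext (hB10 (.inr ())).symm
  have hTb01 (j) : (⟨Tb j, hTbg j⟩ : g01) = B01 (.inl j) :=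
    Subtype.ext (hB01 (.inl j)).symm
  have hWb01 : (⟨Wb, hWbg⟩ : g01) = B01 (.inr ()) := Subtype.ext (hB01 (.inr ())).symm
  simp only [hTb01, hWb01] at hρbT hρbW hωbT hωbW
  have hρ : ρb = B01.coord (.inr ()) := B01.ext fun i => by
    rcases i with k | ⟨⟩ <;> simp [hρbT, hρbW]
  have hω (k) : ωb k = B01.coord (.inl k) := B01.ext fun i => by
    rcases i with k | ⟨⟩ <;> simp [hωbT, hωbW, Finsupp.single_apply, eq_comm]
  have hπ : π' (b (kZ 0)) = B10 (.inr ()) := by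
    rw [← (add_eq_and_I_smul_sub_eq hW hWb).1, map_add, hπW, hπWb, add_zero, hW10]
  -- Folding into `Set.finrank` takes the generating set out of the dependent type
  -- `↥(Submodule.span ℂ _)`, so that `simp` can rewrite it there too.
  rw [← Set.finrank.eq_1]
  simp only [hρ, hω, hT10, hW10, Module.Basis.coord_smulRight]
  rw [← range_symmetricBlockFamily, Set.finrank.eq_1, finrank_span_symmetricBlockFamily,
    span_symmetricBlockFamily]
  exact ⟨Set.ext (forall_proj_lie_comm_iff_mem_symmetricBlockSubmodule hb hT hTb hW hWb
    B10 B01 hB10 hB01 π' hπ), by simp⟩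

/-- for the complexified Kodaira Lie algebra, the kernel of the operator `∂̄`
on `Hom_ℂ(𝔤^{0,1}, 𝔤^{1,0})`, where `(∂̄Γ)(B̄₁,B̄₂) = π^{1,0}⁅B̄₁, Γ(B̄₂)⁆ − π^{1,0}⁅B̄₂, Γ(B̄₁)⁆`,
equals the span of `ρ̄⊗W`, the `ω̄ᵏ⊗W` (1 ≤ k ≤ n) and the `φⱼₖ` (1 ≤ j ≤ k ≤ n); in
particular it has complex dimension `1 + n + n(n+1)/2`.  Here `ρ̄`, `ω̄ʲ` denote the
restrictions to `𝔤^{0,1}` of the corresponding dual-basis functionals (characterized by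
their values on `T̄ₖ` and `W̄`), and `φⱼₖ = (1/2)(ω̄ᵏ⊗Tⱼ + ω̄ʲ⊗Tₖ)`. -/
theorem stmt_12 (n : ℕ) (hn : 1 ≤ n) (L : Type*) [LieRing L] [LieAlgebra ℂ L]
    (b : Module.Basis (KIdx n) ℂ L)
    (hb : ∀ i i' : KIdx n, ⁅b i, b i'⁆ = (kc i i' : ℂ) • b (kZ 0))
    (T Tb : Fin n → L) (W Wb : L)
    (hT : ∀ j, T j = (1 / 2 : ℂ) • b (kX j) - (I / 2 : ℂ) • b (kY j))
    (hTb : ∀ j, Tb j = (1 / 2 : ℂ) • b (kX j) + (I / 2 : ℂ) • b (kY j))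
    (hW : W = (1 / 2 : ℂ) • b (kZ 0) - (I / 2 : ℂ) • b (kZ 1))
    (hWb : Wb = (1 / 2 : ℂ) • b (kZ 0) + (I / 2 : ℂ) • b (kZ 1))
    (g10 g01 : Submodule ℂ L)
    (hg10 : g10 = Submodule.span ℂ (Set.range T ∪ {W}))
    (hg01 : g01 = Submodule.span ℂ (Set.range Tb ∪ {Wb}))
    (hTg : ∀ j, T j ∈ g10) (hWg : W ∈ g10)
    (hTbg : ∀ j, Tb j ∈ g01) (hWbg : Wb ∈ g01)
    (π' : L →ₗ[ℂ] ↥g10)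
    (hπT : ∀ j, π' (T j) = ⟨T j, hTg j⟩) (hπTb : ∀ j, π' (Tb j) = 0)
    (hπW : π' W = ⟨W, hWg⟩) (hπWb : π' Wb = 0)
    (ρb : ↥g01 →ₗ[ℂ] ℂ) (ωb : Fin n → (↥g01 →ₗ[ℂ] ℂ))
    (hρbW : ρb ⟨Wb, hWbg⟩ = 1) (hρbT : ∀ j, ρb ⟨Tb j, hTbg j⟩ = 0)
    (hωbT : ∀ j k, ωb j ⟨Tb k, hTbg k⟩ = if j = k then 1 else 0)
    (hωbW : ∀ j, ωb j ⟨Wb, hWbg⟩ = 0) :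
    ({Γ : ↥g01 →ₗ[ℂ] ↥g10 | ∀ B1 B2 : ↥g01,
        π' ⁅(B1 : L), ((Γ B2 : ↥g10) : L)⁆ = π' ⁅(B2 : L), ((Γ B1 : ↥g10) : L)⁆}
      = ↑(Submodule.span ℂ
          ({ρb.smulRight ⟨W, hWg⟩}
            ∪ Set.range (fun k : Fin n => (ωb k).smulRight ⟨W, hWg⟩)
            ∪ {x : ↥g01 →ₗ[ℂ] ↥g10 | ∃ j k : Fin n, j ≤ k ∧
                x = (1 / 2 : ℂ) • ((ωb k).smulRight ⟨T j, hTg j⟩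
                      + (ωb j).smulRight ⟨T k, hTg k⟩)}))) ∧
    Module.finrank ℂ
        ↥(Submodule.span ℂ
          ({ρb.smulRight ⟨W, hWg⟩}
            ∪ Set.range (fun k : Fin n => (ωb k).smulRight ⟨W, hWg⟩)
            ∪ {x : ↥g01 →ₗ[ℂ] ↥g10 | ∃ j k : Fin n, j ≤ k ∧
                x = (1 / 2 : ℂ) • ((ωb k).smulRight ⟨T j, hTg j⟩
                      + (ωb j).smulRight ⟨T k, hTg k⟩)}))
      = 1 + n + n * (n + 1) / 2 :=
  stmt_12_general n L b hb T Tb W Wb hT hTb hW hWb g10 g01 hg10 hg01 hTg hWg hTbg hWbg π' hπW hπWb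
    ρb ωb hρbW hρbT hωbT hωbW
end
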